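/- Let n ≥ 1, μ > 0 and σ² ≥ 0. Let f* denote the two-point probability measure (σ²/(μ² + σ²))·δ₀ + (μ²/(μ² + σ²))·δ_{μ + σ²/μ}. Suppose 𝒫₁, …, 𝒫ₙ are sets of Borel probability measures on [0,∞) such that every measure in every 𝒫ᵢ has mean μ, and f* ∈ 𝒫ᵢ for every i. Then the robust thresholds satisfy μ ≤ T(i) ≤ μ + σ²/μ for every i with 0 ≤ i ≤ n − 1. -/

import Mathlib

open MeasureTheory

/-- Backward robust thresholds: `robustTAux Ps n k = T(n - k)`, where
`T(n) = 0` and `T(i) = inf_{P ∈ Ps (i+1)} ∫ max (T (i+1)) x dP`. -/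
noncomputable def robustTAux (Ps : ℕ → Set (Measure ℝ)) (n : ℕ) : ℕ → ℝ
  | 0 => 0
  | k + 1 => sInf ((fun P => ∫ x, max (robustTAux Ps n k) x ∂P) '' Ps (n - k))

/-- The robust threshold `T(i)` for `0 ≤ i ≤ n`. -/
noncomputable def robustT (Ps : ℕ → Set (Measure ℝ)) (n i : ℕ) : ℝ :=
  robustTAux Ps n (n - i)

/-- The two-point measure `f* = (σ²/(μ²+σ²))·δ₀ + (μ²/(μ²+σ²))·δ_{μ+σ²/μ}`. -/
noncomputable def fstar (μ s2 : ℝ) : Measure ℝ :=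
  ENNReal.ofReal (s2 / (μ ^ 2 + s2)) • Measure.dirac 0 +
    ENNReal.ofReal (μ ^ 2 / (μ ^ 2 + s2)) • Measure.dirac (μ + s2 / μ)

open Set

/-! Each threshold is an infimum of `∫ max t x dP` over measures of mean `μ`. Since
`max t x ≥ x`, every such integral is at least `μ`. For `0 ≤ t ≤ μ + σ²/μ`, evaluating at `f*`
gives a convex combination of `t` and `μ + σ²/μ`, hence at most `μ + σ²/μ`. Backward induction
keeps `T(i+1)` in `[0, μ + σ²/μ]`, starting from `T(n) = 0`. -/

lemma integral_fstar {μ s2 : ℝ} (hs2 : 0 ≤ s2) (g : ℝ → ℝ) :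
    ∫ x, g x ∂fstar μ s2
      = s2 / (μ ^ 2 + s2) * g 0 + μ ^ 2 / (μ ^ 2 + s2) * g (μ + s2 / μ) := by
  have integrable_dirac (a : ℝ) : Integrable g (Measure.dirac a) :=
    (integrable_congr (ae_eq_dirac g)).mpr (integrable_const _)
  rw [fstar, integral_add_measure
      ((integrable_dirac _).smul_measure ENNReal.ofReal_ne_top)
      ((integrable_dirac _).smul_measure ENNReal.ofReal_ne_top),
    integral_smul_measure, integral_smul_measure, integral_dirac, integral_dirac,
    ENNReal.toReal_ofReal (by positivity), ENNReal.toReal_ofReal (by positivity),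
    smul_eq_mul, smul_eq_mul]

lemma integral_max_fstar_le {μ s2 t : ℝ} (hμ : μ ≠ 0) (hs2 : 0 ≤ s2)
    (ht : t ∈ Icc 0 (μ + s2 / μ)) :
    ∫ x, max t x ∂fstar μ s2 ≤ μ + s2 / μ := by
  have hpos : 0 < μ ^ 2 + s2 := by positivity
  have hsum : s2 / (μ ^ 2 + s2) + μ ^ 2 / (μ ^ 2 + s2) = 1 := by
    field_simp
    ring
  rw [integral_fstar hs2, max_eq_left ht.1, max_eq_right ht.2]
  calc s2 / (μ ^ 2 + s2) * t + μ ^ 2 / (μ ^ 2 + s2) * (μ + s2 / μ)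
      ≤ s2 / (μ ^ 2 + s2) * (μ + s2 / μ) + μ ^ 2 / (μ ^ 2 + s2) * (μ + s2 / μ) := by
        gcongr; exact ht.2
    _ = μ + s2 / μ := by rw [← add_mul, hsum, one_mul]

lemma integral_le_integral_max {P : Measure ℝ} [IsFiniteMeasure P]
    (hint : Integrable (fun x : ℝ => x) P) (t : ℝ) :
    ∫ x, x ∂P ≤ ∫ x, max t x ∂P :=
  integral_mono hint ((integrable_const t).sup hint) fun x => le_max_right t x

lemma sInf_integral_max_mem_Icc {μ s2 t : ℝ} {S : Set (Measure ℝ)} (hμ : μ ≠ 0) (hs2 : 0 ≤ s2)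
    (hfin : ∀ P ∈ S, IsFiniteMeasure P) (hint : ∀ P ∈ S, Integrable (fun x : ℝ => x) P)
    (hmean : ∀ P ∈ S, ∫ x, x ∂P = μ) (hf : fstar μ s2 ∈ S) (ht : t ∈ Icc 0 (μ + s2 / μ)) :
    sInf ((fun P => ∫ x, max t x ∂P) '' S) ∈ Icc μ (μ + s2 / μ) := by
  have hlower : ∀ y ∈ (fun P => ∫ x, max t x ∂P) '' S, μ ≤ y := by
    rintro _ ⟨P, hP, rfl⟩
    have := hfin P hP
    exact hmean P hP ▸ integral_le_integral_max (hint P hP) t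
  exact ⟨le_csInf ⟨_, mem_image_of_mem _ hf⟩ hlower,
    (csInf_le ⟨μ, hlower⟩ (mem_image_of_mem _ hf)).trans (integral_max_fstar_le hμ hs2 ht)⟩

lemma robustTAux_succ_mem_Icc {n : ℕ} {μ s2 : ℝ} {Ps : ℕ → Set (Measure ℝ)} (hμ : 0 < μ)
    (hs2 : 0 ≤ s2) (hprob : ∀ i, 1 ≤ i → i ≤ n → ∀ P ∈ Ps i, IsProbabilityMeasure P)
    (hint : ∀ i, 1 ≤ i → i ≤ n → ∀ P ∈ Ps i, Integrable (fun x : ℝ => x) P)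
    (hmean : ∀ i, 1 ≤ i → i ≤ n → ∀ P ∈ Ps i, (∫ x, x ∂P) = μ)
    (hf : ∀ i, 1 ≤ i → i ≤ n → fstar μ s2 ∈ Ps i) :
    ∀ k < n, robustTAux Ps n (k + 1) ∈ Icc μ (μ + s2 / μ) := by
  have step : ∀ k < n, robustTAux Ps n k ∈ Icc 0 (μ + s2 / μ) →
      robustTAux Ps n (k + 1) ∈ Icc μ (μ + s2 / μ) := fun k hk ht => by
    have hi : 1 ≤ n - k ∧ n - k ≤ n := by omega
    exact sInf_integral_max_mem_Icc hμ.ne' hs2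
      (fun P hP => by have := hprob _ hi.1 hi.2 P hP; infer_instance)
      (hint _ hi.1 hi.2) (hmean _ hi.1 hi.2) (hf _ hi.1 hi.2) ht
  intro k hk
  induction k with
  | zero => exact step 0 hk ⟨le_rfl, by positivity⟩
  | succ k ih =>
    obtain ⟨hlow, hup⟩ := ih (by omega)
    exact step (k + 1) hk ⟨hμ.le.trans hlow, hup⟩

theorem stmt7_general (n : ℕ) (μ s2 : ℝ) (hμ : 0 < μ) (hs2 : 0 ≤ s2)
    (Ps : ℕ → Set (Measure ℝ))
    (hprob : ∀ i, 1 ≤ i → i ≤ n → ∀ P ∈ Ps i, IsProbabilityMeasure P)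
    (hint : ∀ i, 1 ≤ i → i ≤ n → ∀ P ∈ Ps i, Integrable (fun x : ℝ => x) P)
    (hmean : ∀ i, 1 ≤ i → i ≤ n → ∀ P ∈ Ps i, (∫ x, x ∂P) = μ)
    (hf : ∀ i, 1 ≤ i → i ≤ n → fstar μ s2 ∈ Ps i) :
    ∀ i : ℕ, i + 1 ≤ n → μ ≤ robustT Ps n i ∧ robustT Ps n i ≤ μ + s2 / μ := by
  intro i hi
  have hidx : n - i = (n - i - 1) + 1 := by omega
  rw [robustT, hidx]
  exact robustTAux_succ_mem_Icc hμ hs2 hprob hint hmean hf _ (by omega)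

theorem stmt7 (n : ℕ) (hn : 1 ≤ n) (μ s2 : ℝ) (hμ : 0 < μ) (hs2 : 0 ≤ s2)
    (Ps : ℕ → Set (Measure ℝ))
    (hprob : ∀ i, 1 ≤ i → i ≤ n → ∀ P ∈ Ps i, IsProbabilityMeasure P)
    (hsupp : ∀ i, 1 ≤ i → i ≤ n → ∀ P ∈ Ps i, P (Set.Ici (0 : ℝ)) = 1)
    (hint : ∀ i, 1 ≤ i → i ≤ n → ∀ P ∈ Ps i, Integrable (fun x : ℝ => x) P)
    (hmean : ∀ i, 1 ≤ i → i ≤ n → ∀ P ∈ Ps i, (∫ x, x ∂P) = μ)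
    (hf : ∀ i, 1 ≤ i → i ≤ n → fstar μ s2 ∈ Ps i) :
    ∀ i : ℕ, i + 1 ≤ n → μ ≤ robustT Ps n i ∧ robustT Ps n i ≤ μ + s2 / μ :=
  stmt7_general n μ s2 hμ hs2 Ps hprob hint hmean hf
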